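/- Let Ω, Ω₁, Ω₂ be nonempty closed convex subsets of ℝ² with Ω ∩ Ωᵢ = ∅ for i = 1, 2, let x̄ ∈ Ω, and suppose there is a vector a ≠ 0 such that N(x̄;Ω) = span{a}. Set aᵢ = (x̄ − Π(x̄;Ωᵢ))/d(x̄;Ωᵢ) for i = 1, 2. If either a₁ + a₂ = 0, or both a₁ ≠ a₂ and cos(a₁, a) = cos(a₂, a), then x̄ is an optimal solution of the generalized Heron problem with sets Ω₁, Ω₂, i.e., d(x̄;Ω₁) + d(x̄;Ω₂) ≤ d(x;Ω₁) + d(x;Ω₂) for all x ∈ Ω. -/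

import Mathlib

/-!
The unit vector `aᵢ` is a subgradient of the convex function `d(·; Ωᵢ)` at `x̄`, so
`d(x̄; Ω₁) + d(x̄; Ω₂) + ⟪a₁ + a₂, x - x̄⟫ ≤ d(x; Ω₁) + d(x; Ω₂)`, and it suffices that
`-(a₁ + a₂)` lies in the normal cone `span {a}`. This is trivial if `a₁ + a₂ = 0`. Otherwise the
nonzero vector `a₁ - a₂` is orthogonal both to `a` (equal cosines) and to `a₁ + a₂` (equal norms);
in the plane its orthogonal complement is the line `span {a}`, which therefore contains `a₁ + a₂`.
-/

open Metric Module Submodule RealInnerProductSpace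
open scoped EuclideanSpace

section Subgradient

variable {E : Type*} [NormedAddCommGroup E] [InnerProductSpace ℝ E]

theorem norm_inv_dist_smul_sub_eq_one {x p : E} (h : x ≠ p) : ‖(dist x p)⁻¹ • (x - p)‖ = 1 := by
  rw [dist_eq_norm]
  exact norm_smul_inv_norm (sub_ne_zero.2 h)

/-- Also valid when `x₀ = p`, where the vector is `0⁻¹ • 0 = 0`. -/
theorem infDist_add_inner_le_infDist {K : Set E} (hK : Convex ℝ K) {x₀ p : E} (hp : p ∈ K)
    (hd : dist x₀ p = infDist x₀ K) (x : E) :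
    infDist x₀ K + ⟪(infDist x₀ K)⁻¹ • (x₀ - p), x - x₀⟫ ≤ infDist x K := by
  have hv : ‖x₀ - p‖ = infDist x₀ K := by rw [← dist_eq_norm, hd]
  have hproj : ∀ y ∈ K, ⟪x₀ - p, y - p⟫ ≤ 0 := by
    rw [← norm_eq_iInf_iff_real_inner_le_zero hK hp, hv, infDist_eq_iInf]
    simp only [dist_eq_norm]
  set d := infDist x₀ K
  set u := d⁻¹ • (x₀ - p)
  have hunit : ‖u‖ ≤ 1 := by
    rw [norm_smul, hv, Real.norm_of_nonneg (inv_nonneg.2 infDist_nonneg)]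
    exact inv_mul_le_one
  have hu_self : ⟪u, x₀ - p⟫ = d := by
    rw [real_inner_smul_left, real_inner_self_eq_norm_sq, hv, sq, ← mul_assoc, inv_mul_mul_self]
  refine (le_infDist ⟨p, hp⟩).2 fun y hy => ?_
  have hu_y : ⟪u, y - p⟫ ≤ 0 := by
    rw [real_inner_smul_left]
    exact mul_nonpos_of_nonneg_of_nonpos (inv_nonneg.2 infDist_nonneg) (hproj y hy)
  calc d + ⟪u, x - x₀⟫ ≤ ⟪u, x - x₀⟫ + ⟪u, x₀ - p⟫ - ⟪u, y - p⟫ := by linarith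
    _ = ⟪u, x - y⟫ := by
        rw [← inner_add_right, ← inner_sub_right]
        congr 1
        abel
    _ ≤ ‖u‖ * ‖x - y‖ := real_inner_le_norm _ _
    _ ≤ dist x y := by
        rw [dist_eq_norm]
        exact mul_le_of_le_one_left (norm_nonneg _) hunit

end Subgradient

section Plane

attribute [local instance] FiniteDimensional.of_fact_finrank_eq_two

variable {E : Type*} [NormedAddCommGroup E] [InnerProductSpace ℝ E] [Fact (finrank ℝ E = 2)]

theorem mem_span_singleton_of_inner_eq_zero {u a b : E} (hu : u ≠ 0) (ha : a ≠ 0)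
    (hua : ⟪u, a⟫ = 0) (hub : ⟪u, b⟫ = 0) : b ∈ ℝ ∙ a := by
  have : Fact (finrank ℝ E = 1 + 1) := ‹Fact (finrank ℝ E = 2)›
  have hline : ℝ ∙ a = (ℝ ∙ u)ᗮ :=
    eq_of_le_of_finrank_eq ((span_singleton_le_iff_mem _ _).2
        (mem_orthogonal_singleton_iff_inner_right.2 hua))
      (by rw [finrank_span_singleton ha, finrank_orthogonal_span_singleton (n := 1) hu])
  exact hline ▸ mem_orthogonal_singleton_iff_inner_right.2 hub

theorem add_mem_span_singleton_of_inner_eq {a b c : E} (hc : c ≠ 0) (hab : a ≠ b)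
    (hnorm : ‖a‖ = ‖b‖) (hinner : ⟪a, c⟫ = ⟪b, c⟫) : a + b ∈ ℝ ∙ c :=
  mem_span_singleton_of_inner_eq_zero (sub_ne_zero.2 hab) hc
    (by rw [inner_sub_left, hinner, sub_self])
    (by rw [real_inner_comm, (real_inner_add_sub_eq_zero_iff a b).2 hnorm])

end Plane

theorem heron_two_sets_sufficient_plane_general
    (Ω Ω₁ Ω₂ : Set (EuclideanSpace ℝ (Fin 2)))
    (h1cv : Convex ℝ Ω₁)
    (h2cv : Convex ℝ Ω₂)
    (hdisj1 : Ω ∩ Ω₁ = ∅) (hdisj2 : Ω ∩ Ω₂ = ∅)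
    (xbar : EuclideanSpace ℝ (Fin 2)) (hxbar : xbar ∈ Ω)
    (a : EuclideanSpace ℝ (Fin 2)) (hane : a ≠ 0)
    (hN : {v : EuclideanSpace ℝ (Fin 2) | ∀ x ∈ Ω, (inner ℝ v (x - xbar) : ℝ) ≤ 0}
        = (Submodule.span ℝ {a} : Submodule ℝ (EuclideanSpace ℝ (Fin 2))))
    (p₁ p₂ : EuclideanSpace ℝ (Fin 2))
    (hp₁ : p₁ ∈ Ω₁ ∧ dist xbar p₁ = Metric.infDist xbar Ω₁)
    (hp₂ : p₂ ∈ Ω₂ ∧ dist xbar p₂ = Metric.infDist xbar Ω₂)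
    (a₁ a₂ : EuclideanSpace ℝ (Fin 2))
    (ha₁ : a₁ = (Metric.infDist xbar Ω₁)⁻¹ • (xbar - p₁))
    (ha₂ : a₂ = (Metric.infDist xbar Ω₂)⁻¹ • (xbar - p₂))
    (hyp : a₁ + a₂ = 0 ∨
      (a₁ ≠ a₂ ∧ (inner ℝ a₁ a : ℝ) / (‖a₁‖ * ‖a‖) = (inner ℝ a₂ a : ℝ) / (‖a₂‖ * ‖a‖))) :
    ∀ x ∈ Ω, Metric.infDist xbar Ω₁ + Metric.infDist xbar Ω₂ ≤
      Metric.infDist x Ω₁ + Metric.infDist x Ω₂ := by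
  intro x hx
  have hunit₁ : ‖a₁‖ = 1 := by
    rw [ha₁, ← hp₁.2]
    exact norm_inv_dist_smul_sub_eq_one
      ((Set.disjoint_iff_inter_eq_empty.2 hdisj1).ne_of_mem hxbar hp₁.1)
  have hunit₂ : ‖a₂‖ = 1 := by
    rw [ha₂, ← hp₂.2]
    exact norm_inv_dist_smul_sub_eq_one
      ((Set.disjoint_iff_inter_eq_empty.2 hdisj2).ne_of_mem hxbar hp₂.1)
  have hspan : a₁ + a₂ ∈ ℝ ∙ a := by
    rcases hyp with hzero | ⟨hne, hcos⟩
    · exact hzero ▸ zero_mem _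
    · rw [hunit₁, hunit₂, div_left_inj' (by simpa using hane)] at hcos
      exact add_mem_span_singleton_of_inner_eq hane hne (hunit₁.trans hunit₂.symm) hcos
  have hnormal : -(a₁ + a₂) ∈ {v | ∀ x ∈ Ω, ⟪v, x - xbar⟫ ≤ 0} := by
    rw [hN]
    exact neg_mem hspan
  have hsub₁ := ha₁ ▸ infDist_add_inner_le_infDist h1cv hp₁.1 hp₁.2 x
  have hsub₂ := ha₂ ▸ infDist_add_inner_le_infDist h2cv hp₂.1 hp₂.2 x
  have hcone := hnormal x hx
  rw [inner_neg_left, inner_add_left] at hcone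
  linarith

/-- Theorem 3.5(ii): in `ℝ²`, for the two-set generalized Heron problem with
`N(xbar; Ω) = span{a}`, `a ≠ 0`, if either `a₁ + a₂ = 0` or both `a₁ ≠ a₂` and
`cos(a₁, a) = cos(a₂, a)`, then `xbar` is an optimal solution, where
`aᵢ = (xbar - Π(xbar; Ωᵢ)) / d(xbar; Ωᵢ)`. -/
theorem heron_two_sets_sufficient_plane
    (Ω Ω₁ Ω₂ : Set (EuclideanSpace ℝ (Fin 2)))
    (hΩne : Ω.Nonempty) (hΩcl : IsClosed Ω) (hΩcv : Convex ℝ Ω)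
    (h1ne : Ω₁.Nonempty) (h1cl : IsClosed Ω₁) (h1cv : Convex ℝ Ω₁)
    (h2ne : Ω₂.Nonempty) (h2cl : IsClosed Ω₂) (h2cv : Convex ℝ Ω₂)
    (hdisj1 : Ω ∩ Ω₁ = ∅) (hdisj2 : Ω ∩ Ω₂ = ∅)
    (xbar : EuclideanSpace ℝ (Fin 2)) (hxbar : xbar ∈ Ω)
    (a : EuclideanSpace ℝ (Fin 2)) (hane : a ≠ 0)
    (hN : {v : EuclideanSpace ℝ (Fin 2) | ∀ x ∈ Ω, (inner ℝ v (x - xbar) : ℝ) ≤ 0}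
        = (Submodule.span ℝ {a} : Submodule ℝ (EuclideanSpace ℝ (Fin 2))))
    (p₁ p₂ : EuclideanSpace ℝ (Fin 2))
    (hp₁ : p₁ ∈ Ω₁ ∧ dist xbar p₁ = Metric.infDist xbar Ω₁)
    (hp₂ : p₂ ∈ Ω₂ ∧ dist xbar p₂ = Metric.infDist xbar Ω₂)
    (a₁ a₂ : EuclideanSpace ℝ (Fin 2))
    (ha₁ : a₁ = (Metric.infDist xbar Ω₁)⁻¹ • (xbar - p₁))
    (ha₂ : a₂ = (Metric.infDist xbar Ω₂)⁻¹ • (xbar - p₂))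
    (hyp : a₁ + a₂ = 0 ∨
      (a₁ ≠ a₂ ∧ (inner ℝ a₁ a : ℝ) / (‖a₁‖ * ‖a‖) = (inner ℝ a₂ a : ℝ) / (‖a₂‖ * ‖a‖))) :
    ∀ x ∈ Ω, Metric.infDist xbar Ω₁ + Metric.infDist xbar Ω₂ ≤
      Metric.infDist x Ω₁ + Metric.infDist x Ω₂ :=
  heron_two_sets_sufficient_plane_general Ω Ω₁ Ω₂ h1cv h2cv hdisj1 hdisj2 xbar hxbar a hane hN p₁ p₂
    hp₁ hp₂ a₁ a₂ ha₁ ha₂ hyp
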